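/- Let X = (X_1,…,X_n) be any random vector and Y = (Y_1,…,Y_n) its vector of order statistics, so Y = f ∘ X where f : ℝ^n → ℝ^n is the sorting map. Then the σ-field generated by Y satisfies σ(Y) = X^{-1}(ℬ⁺), where ℬ⁺ := { (B ∩ Γ_0)⁺ : B ∈ ℬ(ℝ^n) } is the symmetric σ-field, i.e., the σ-field of symmetric Borel subsets of ℝ^n. -/

import Mathlib

open MeasureTheory

/-- The sorting map: rearranges the coordinates of `x : Fin n → ℝ` in nondecreasing order. -/
noncomputable def sortVec {n : ℕ} (x : Fin n → ℝ) : Fin n → ℝ :=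
  x ∘ Tuple.sort x

/-- For `B ⊆ ℝ^n`, `symmetrize B = B⁺` is the union over all permutations `π` of
the permuted copies `{(x_{π(1)},…,x_{π(n)}) : x ∈ B}`. -/
def symmetrize {n : ℕ} (B : Set (Fin n → ℝ)) : Set (Fin n → ℝ) :=
  ⋃ π : Equiv.Perm (Fin n), (fun x : Fin n → ℝ => x ∘ ⇑π) '' B

/-- `Γ₀ = {x ∈ ℝ^n : x_1 ≤ ⋯ ≤ x_n}`, the cone of nondecreasing vectors. -/
def Gamma0 (n : ℕ) : Set (Fin n → ℝ) :=
  {x | Monotone x}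

lemma sortVec_comp_perm {n : ℕ} (x : Fin n → ℝ) (π : Equiv.Perm (Fin n)) :
    sortVec (x ∘ π) = sortVec x :=
  Tuple.comp_perm_comp_sort_eq_comp_sort

lemma sortVec_eq_self {n : ℕ} {x : Fin n → ℝ} (hx : Monotone x) : sortVec x = x := by
  rw [sortVec, Tuple.sort_eq_refl_iff_monotone.2 hx]
  rfl

lemma sortVec_comp_sort_inv {n : ℕ} (x : Fin n → ℝ) : sortVec x ∘ ⇑(Tuple.sort x)⁻¹ = x := by
  ext i
  simp [sortVec]

lemma symmetrize_inter_Gamma0 {n : ℕ} (B : Set (Fin n → ℝ)) :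
    symmetrize (B ∩ Gamma0 n) = sortVec ⁻¹' B := by
  ext x
  constructor
  · rintro ⟨_, ⟨π, rfl⟩, y, ⟨hyB, hy⟩, rfl⟩
    rwa [Set.mem_preimage, sortVec_comp_perm, sortVec_eq_self hy]
  · intro hx
    exact Set.mem_iUnion.2
      ⟨(Tuple.sort x)⁻¹, sortVec x, ⟨hx, Tuple.monotone_sort x⟩, sortVec_comp_sort_inv x⟩

theorem sigma_field_order_statistics_eq_preimage_symmetric_general
    {Ω : Type*} [MeasurableSpace Ω]
    {n : ℕ} (X : Ω → Fin n → ℝ) :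
    ∀ A : Set Ω,
      MeasurableSet[MeasurableSpace.comap (fun ω => sortVec (X ω)) inferInstance] A ↔
        ∃ B : Set (Fin n → ℝ), MeasurableSet B ∧ A = X ⁻¹' symmetrize (B ∩ Gamma0 n) := by
  intro A
  -- both sides now say `A = (sortVec ∘ X) ⁻¹' B` for some Borel `B`
  simp only [symmetrize_inter_Gamma0, eq_comm (a := A)]
  rfl

/-- For any random vector `X` with vector of order statistics `Y = sortVec ∘ X`,
the σ-field generated by `Y` equals `X⁻¹(ℬ⁺)`, the family of preimages under `X`
of the members `(B ∩ Γ₀)⁺`, `B` Borel, of the symmetric σ-field `ℬ⁺`. -/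
theorem sigma_field_order_statistics_eq_preimage_symmetric
    {Ω : Type*} [MeasurableSpace Ω]
    {n : ℕ} (X : Ω → Fin n → ℝ) (hX : Measurable X) :
    ∀ A : Set Ω,
      MeasurableSet[MeasurableSpace.comap (fun ω => sortVec (X ω)) inferInstance] A ↔
        ∃ B : Set (Fin n → ℝ), MeasurableSet B ∧ A = X ⁻¹' symmetrize (B ∩ Gamma0 n) :=
  sigma_field_order_statistics_eq_preimage_symmetric_general X
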